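/- Rotation preserves bigram multisets: for a character z and strings x₁, x₂, the strings z x₁ z x₂ z and z x₂ z x₁ z have the same multiset of bigrams (with delimiters). -/

import Mathlib

/-! Every bigram of a list lies on one side of any given position, so cutting a list at a letter
`c` (kept on both sides) splits its bigram multiset. Cutting `p c u c v c s` at its three marked
`c`s gives four blocks, whose bigrams do not change when the two middle blocks `c u c` and `c v c`
are exchanged. -/

def bigrams {β : Type*} (l : List β) : Multiset (β × β) :=
  (l.zip l.tail : List (β × β))

def delim {α : Type*} (w : List α) : List (Option α) :=
  none :: (w.map some ++ [none])

def Phi {α : Type*} (w : List α) : Multiset (Option α × Option α) :=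
  bigrams (delim w)

def UD {α : Type*} (w : List α) : Prop :=
  ∀ w' : List α, Phi w' = Phi w → w' = w

section Bigrams

variable {β : Type*}

lemma bigrams_cons_cons (a b : β) (l : List β) :
    bigrams (a :: b :: l) = (a, b) ::ₘ bigrams (b :: l) := by
  simp [bigrams]

lemma bigrams_append_cons (u : List β) (c : β) (v : List β) :
    bigrams (u ++ c :: v) = bigrams (u ++ [c]) + bigrams (c :: v) := by
  induction u with
  | nil => simp [bigrams]
  | cons a u ih =>
    cases u with
    | nil => simp [bigrams]
    | cons b u =>
      simp only [List.cons_append, bigrams_cons_cons] at ih ⊢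
      rw [ih, Multiset.cons_add]

lemma bigrams_swap_blocks (p u v s : List β) (c : β) :
    bigrams (p ++ c :: u ++ c :: v ++ c :: s) = bigrams (p ++ c :: v ++ c :: u ++ c :: s) := by
  have split : ∀ u v : List β, bigrams (p ++ c :: u ++ c :: v ++ c :: s) =
      bigrams (p ++ [c]) + bigrams (c :: u ++ [c]) + bigrams (c :: v ++ [c]) + bigrams (c :: s) := by
    intro u v
    simp only [List.append_assoc, List.cons_append]
    rw [bigrams_append_cons p, ← List.cons_append, bigrams_append_cons (c :: u),
      ← List.cons_append, bigrams_append_cons (c :: v), add_assoc, add_assoc]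
    simp only [List.cons_append]
  rw [split, split, add_right_comm (bigrams (p ++ [c]))]

end Bigrams

theorem rotation_preserves_bigrams {α : Type*} (z : α) (x₁ x₂ : List α) :
    Phi ([z] ++ x₁ ++ [z] ++ x₂ ++ [z]) = Phi ([z] ++ x₂ ++ [z] ++ x₁ ++ [z]) := by
  have delim_eq : ∀ u v : List α, delim ([z] ++ u ++ [z] ++ v ++ [z]) =
      [none] ++ some z :: u.map some ++ some z :: v.map some ++ some z :: [none] := by
    intro u v
    simp [delim]
  rw [Phi, Phi, delim_eq, delim_eq, bigrams_swap_blocks]
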